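/- Let ρ be a positive semidefinite matrix with support S and M ⊆ S a subspace. If (ρ₁, ρ₂) and (ρ₁', ρ₂') are two pairs of positive semidefinite matrices each satisfying ρ₁ + ρ₂ = ρ, supp(ρ₁) = M, and supp(ρ₁) ∩ supp(ρ₂) = {0} (and similarly for the primed pair), then ρ₁ = ρ₁' and ρ₂ = ρ₂'. -/

import Mathlib

open Matrix BigOperators ComplexOrder

/-- Support of a matrix: the range (column space) of the associated linear map.
For a positive semidefinite matrix this is the orthogonal complement of its kernel. -/
noncomputable def supp {n : ℕ} (A : Matrix (Fin n) (Fin n) ℂ) : Submodule ℂ (Fin n → ℂ) :=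
  LinearMap.range A.mulVecLin

/-- Matrices are determined by their action on vectors. -/
lemma mulVec_ext_aux {n : ℕ} {A B : Matrix (Fin n) (Fin n) ℂ}
    (h : ∀ v, A.mulVec v = B.mulVec v) : A = B := by
  have : Matrix.toLin' A = Matrix.toLin' B := by
    apply LinearMap.ext
    intro v
    simpa [Matrix.toLin'_apply] using h v
  simpa using Matrix.toLin'.injective this

/-- Existence of an oblique projection which is the identity on `M = supp ρ₁` and kills
`supp ρ₂`. -/
lemma exists_proj_aux {n : ℕ} (ρ₁ ρ₂ : Matrix (Fin n) (Fin n) ℂ)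
    (M : Submodule ℂ (Fin n → ℂ)) (hsupp : supp ρ₁ = M)
    (hdisj : supp ρ₁ ⊓ supp ρ₂ = ⊥) :
    ∃ Q : (Fin n → ℂ) →ₗ[ℂ] (Fin n → ℂ),
      (∀ x ∈ M, Q x = x) ∧ (∀ v, Q (ρ₂.mulVec v) = 0) := by
  subst hsupp
  set M := supp ρ₁
  set K := supp ρ₂
  obtain ⟨C, hC⟩ := (M ⊔ K).exists_isCompl
  set W := K ⊔ C with hW
  have hMW : IsCompl M W := by
    constructor
    · rw [disjoint_iff]
      ext x
      simp only [Submodule.mem_inf, Submodule.mem_bot]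
      constructor
      · rintro ⟨hxM, hxW⟩
        obtain ⟨k, hk, c, hc, rfl⟩ := Submodule.mem_sup.mp hxW
        have h1 : k + c - k ∈ M ⊔ K := by
          refine Submodule.sub_mem _ (Submodule.mem_sup_left hxM) (Submodule.mem_sup_right hk)
        have h2 : c = 0 := by
          have := hC.disjoint
          rw [disjoint_iff] at this
          have : k + c - k ∈ (M ⊔ K) ⊓ C := by
            refine Submodule.mem_inf.mpr ⟨by simpa using h1, by simpa using hc⟩
          rw [disjoint_iff.mp hC.disjoint] at this
          simpa using this
        subst h2
        have : k + 0 ∈ M ⊓ K := Submodule.mem_inf.mpr ⟨hxM, by simpa using hk⟩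
        rw [hdisj] at this
        simpa using this
      · rintro rfl
        exact ⟨Submodule.zero_mem _, Submodule.zero_mem _⟩
    · rw [codisjoint_iff]
      rw [hW, ← sup_assoc]
      exact codisjoint_iff.mp hC.codisjoint
  refine ⟨M.subtype ∘ₗ Submodule.projectionOnto M W hMW, ?_, ?_⟩
  · intro x hx
    simp [Submodule.projectionOnto_apply_left hMW ⟨x, hx⟩]
  · intro v
    have hmem : ρ₂.mulVec v ∈ W := by
      refine Submodule.mem_sup_left ?_
      exact ⟨v, rfl⟩
    simp [Submodule.projectionOnto_apply_of_mem_right hMW hmem]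

theorem stmt_1 {n : ℕ} (ρ : Matrix (Fin n) (Fin n) ℂ) (hρ : ρ.PosSemidef)
    (M : Submodule ℂ (Fin n → ℂ)) (hM : M ≤ supp ρ)
    (ρ₁ ρ₂ ρ₁' ρ₂' : Matrix (Fin n) (Fin n) ℂ)
    (h₁ : ρ₁.PosSemidef) (h₂ : ρ₂.PosSemidef)
    (h₁' : ρ₁'.PosSemidef) (h₂' : ρ₂'.PosSemidef)
    (hsum : ρ₁ + ρ₂ = ρ) (hsupp : supp ρ₁ = M) (hdisj : supp ρ₁ ⊓ supp ρ₂ = ⊥)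
    (hsum' : ρ₁' + ρ₂' = ρ) (hsupp' : supp ρ₁' = M) (hdisj' : supp ρ₁' ⊓ supp ρ₂' = ⊥) :
    ρ₁ = ρ₁' ∧ ρ₂ = ρ₂' := by
  obtain ⟨Q, hQid, hQker⟩ := exists_proj_aux ρ₁ ρ₂ M hsupp hdisj
  obtain ⟨Q', hQid', hQker'⟩ := exists_proj_aux ρ₁' ρ₂' M hsupp' hdisj'
  set D : Matrix (Fin n) (Fin n) ℂ := ρ₁ - ρ₁' with hDdef
  set R : Matrix (Fin n) (Fin n) ℂ := LinearMap.toMatrix' (Q - Q') with hRdef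
  have hRv : ∀ w, R.mulVec w = Q w - Q' w := by
    intro w
    rw [hRdef, ← Matrix.toLin'_apply, Matrix.toLin'_toMatrix']
    simp
  have hmem₁ : ∀ v, ρ₁.mulVec v ∈ M := by
    intro v; rw [← hsupp]; exact ⟨v, rfl⟩
  have hmem₁' : ∀ v, ρ₁'.mulVec v ∈ M := by
    intro v; rw [← hsupp']; exact ⟨v, rfl⟩
  -- R * ρ = D
  have hRρ : R * ρ = D := by
    apply mulVec_ext_aux
    intro v
    rw [← Matrix.mulVec_mulVec, hRv]
    have hv : ρ.mulVec v = ρ₁.mulVec v + ρ₂.mulVec v := by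
      rw [← hsum, Matrix.add_mulVec]
    have hv' : ρ.mulVec v = ρ₁'.mulVec v + ρ₂'.mulVec v := by
      rw [← hsum', Matrix.add_mulVec]
    have e1 : Q (ρ.mulVec v) = ρ₁.mulVec v := by
      rw [hv, map_add, hQker v, add_zero, hQid _ (hmem₁ v)]
    have e2 : Q' (ρ.mulVec v) = ρ₁'.mulVec v := by
      rw [hv', map_add, hQker' v, add_zero, hQid' _ (hmem₁' v)]
    rw [e1, e2, hDdef, Matrix.sub_mulVec]
  -- R * D = 0
  have hRD : R * D = 0 := by
    apply mulVec_ext_aux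
    intro v
    rw [← Matrix.mulVec_mulVec, hRv]
    have hDv : D.mulVec v ∈ M := by
      rw [hDdef, Matrix.sub_mulVec]
      exact Submodule.sub_mem _ (hmem₁ v) (hmem₁' v)
    rw [hQid _ hDv, hQid' _ hDv, sub_self]
    simp
  have hDherm : D.IsHermitian := h₁.1.sub h₁'.1
  -- ρ * Rᴴ = D
  have hρR : ρ * Rᴴ = D := by
    calc ρ * Rᴴ = ρᴴ * Rᴴ := by rw [hρ.1]
    _ = (R * ρ)ᴴ := by rw [Matrix.conjTranspose_mul]
    _ = Dᴴ := by rw [hRρ]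
    _ = D := hDherm
  have hmid : R * ρ * Rᴴ = 0 := by
    rw [Matrix.mul_assoc, hρR, hRD]
  -- use the square root of ρ
  obtain ⟨s, hss, hsherm⟩ : ∃ s : Matrix (Fin n) (Fin n) ℂ, s * s = ρ ∧ sᴴ = s := by
    open scoped MatrixOrder in
    exact ⟨CFC.sqrt ρ, CFC.sqrt_mul_sqrt_self ρ hρ.nonneg, (CFC.sqrt_nonneg ρ).posSemidef.1⟩
  have hRs : R * s = 0 := by
    have : (R * s) * (R * s)ᴴ = 0 := by
      rw [Matrix.conjTranspose_mul, hsherm, show R * s * (s * Rᴴ) = R * (s * s) * Rᴴ by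
        simp only [Matrix.mul_assoc], hss, hmid]
    exact Matrix.self_mul_conjTranspose_eq_zero.mp this
  have hD0 : D = 0 := by
    rw [← hRρ, ← hss, ← Matrix.mul_assoc, hRs, Matrix.zero_mul]
  have h1 : ρ₁ = ρ₁' := by
    have := sub_eq_zero.mp (hDdef ▸ hD0)
    exact this
  refine ⟨h1, ?_⟩
  have : ρ₂ = ρ - ρ₁ := by rw [← hsum]; exact (add_sub_cancel_left _ _).symm
  have h2' : ρ₂' = ρ - ρ₁' := by rw [← hsum']; exact (add_sub_cancel_left _ _).symm
  rw [this, h2', h1]
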